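/- arXiv:2011.03305 — 4 statements merged into one kernel-verified Lean document; each statement's English description precedes it below -/
import Mathlib

section
/- Let g : ℝ → ℝ be convex with bounded nonempty sublevel sets, let λ, μ ∈ [0,∞), and let b⁻, b⁺ ∈ ℝ with b⁻ ≤ b⁺ satisfy −λ ∈ ∂g(b⁻) and μ ∈ ∂g(b⁺). For y ∈ ℝ define z_y(x) = g(x) + λ(x−y)₊ + μ(y−x)₊. Then for every y ∈ ℝ, the point x*(y) = min(b⁺, max(b⁻, y)) is a global minimizer of z_y over ℝ. -/
/-! Slopes of a convex function increase, so the subgradient `-λ` at `b⁻` bounds every slope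
to the right of `b⁻` from below, and the subgradient `μ` at `b⁺` bounds every slope to the left of
`b⁺` from above. Hence for `y ∈ [b⁻, b⁺]` moving away from `y` never gains more than the penalty
charges, and for `y` outside the interval the subgradient inequality at the nearest endpoint does
the same job. -/

open Filter Topology Set

def subdiff (g : ℝ → ℝ) (x : ℝ) : Set ℝ :=
  {d : ℝ | ∀ z : ℝ, g x + d * (z - x) ≤ g z}

namespace ConvexOn

variable {g : ℝ → ℝ} {d : ℝ}

theorem add_mul_sub_le_of_mem_subdiff_of_le (hg : ConvexOn ℝ univ g) {a u x : ℝ}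
    (hd : d ∈ subdiff g a) (hau : a ≤ u) (hux : u ≤ x) : g u + d * (x - u) ≤ g x := by
  rcases hux.eq_or_lt with rfl | hux
  · simp
  rcases hau.eq_or_lt with rfl | hau
  · exact hd x
  have hd_slope : d ≤ (g u - g a) / (u - a) := by
    rw [le_div_iff₀ (sub_pos.2 hau)]
    linarith [hd u]
  have h := hd_slope.trans (hg.slope_mono_adjacent (mem_univ a) (mem_univ x) hau hux)
  rw [le_div_iff₀ (sub_pos.2 hux)] at h
  linarith

theorem add_mul_sub_le_of_mem_subdiff_of_ge (hg : ConvexOn ℝ univ g) {b u x : ℝ}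
    (hd : d ∈ subdiff g b) (hub : u ≤ b) (hxu : x ≤ u) : g u + d * (x - u) ≤ g x := by
  rcases hxu.eq_or_lt with rfl | hxu
  · simp
  rcases hub.eq_or_lt with rfl | hub
  · exact hd x
  have hd_slope : (g b - g u) / (b - u) ≤ d := by
    rw [div_le_iff₀ (sub_pos.2 hub)]
    linarith [hd u]
  have h := (hg.slope_mono_adjacent (mem_univ x) (mem_univ b) hxu hub).trans hd_slope
  rw [div_le_iff₀ (sub_pos.2 hxu)] at h
  linarith

end ConvexOn

theorem stmt_11_general (g : ℝ → ℝ) (hg : ConvexOn ℝ Set.univ g)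
    (lam mu : ℝ) (hlam : 0 ≤ lam) (hmu : 0 ≤ mu)
    (bm bp : ℝ) (hb : bm ≤ bp) (hbm : -lam ∈ subdiff g bm) (hbp : mu ∈ subdiff g bp) :
    ∀ y x : ℝ,
      g (min bp (max bm y)) + lam * max (min bp (max bm y) - y) 0
          + mu * max (y - min bp (max bm y)) 0
        ≤ g x + lam * max (x - y) 0 + mu * max (y - x) 0 := by
  intro y x
  have hlam_pen : lam * (x - y) ≤ lam * max (x - y) 0 + mu * max (y - x) 0 := by
    nlinarith [le_max_left (x - y) 0, le_max_right (y - x) 0]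
  have hmu_pen : mu * (y - x) ≤ lam * max (x - y) 0 + mu * max (y - x) 0 := by
    nlinarith [le_max_right (x - y) 0, le_max_left (y - x) 0]
  rcases le_total y bm with hy_bm | hbm_y
  · rw [max_eq_left hy_bm, min_eq_right hb, max_eq_left (sub_nonneg.2 hy_bm),
      max_eq_right (sub_nonpos.2 hy_bm)]
    linarith [hbm x]
  rcases le_total bp y with hbp_y | hy_bp
  · rw [max_eq_right (hb.trans hbp_y), min_eq_left hbp_y, max_eq_right (sub_nonpos.2 hbp_y),
      max_eq_left (sub_nonneg.2 hbp_y)]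
    linarith [hbp x]
  rw [max_eq_right hbm_y, min_eq_right hy_bp, sub_self, max_self]
  rcases le_total y x with hyx | hxy
  · linarith [hg.add_mul_sub_le_of_mem_subdiff_of_le hbm hbm_y hyx]
  · linarith [hg.add_mul_sub_le_of_mem_subdiff_of_ge hbp hy_bp hxy]

theorem stmt_11 (g : ℝ → ℝ) (hg : ConvexOn ℝ Set.univ g)
    (hlev : ∃ α : ℝ, {x : ℝ | g x ≤ α}.Nonempty ∧ Bornology.IsBounded {x : ℝ | g x ≤ α})
    (lam mu : ℝ) (hlam : 0 ≤ lam) (hmu : 0 ≤ mu)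
    (bm bp : ℝ) (hb : bm ≤ bp) (hbm : -lam ∈ subdiff g bm) (hbp : mu ∈ subdiff g bp) :
    ∀ y x : ℝ,
      g (min bp (max bm y)) + lam * max (min bp (max bm y) - y) 0
          + mu * max (y - min bp (max bm y)) 0
        ≤ g x + lam * max (x - y) 0 + mu * max (y - x) 0 :=
  stmt_11_general g hg lam mu hlam hmu bm bp hb hbm hbp
end

section
/- Let g : ℝ → ℝ be convex with bounded nonempty sublevel sets, let λ, μ ∈ [0,∞), and let b⁻ ≤ b⁺ satisfy −λ ∈ ∂g(b⁻) and μ ∈ ∂g(b⁺). Define h(y) = min_{x∈ℝ} { g(x) + λ(x−y)₊ + μ(y−x)₊ }. Then h(y) = g(b⁻) + λ(b⁻ − y) if y < b⁻; h(y) = g(y) if b⁻ ≤ y ≤ b⁺; and h(y) = g(b⁺) + μ(y − b⁺) if y > b⁺. -/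
/-! The penalty `λ(x−y)₊ + μ(y−x)₊` dominates both `λ(x−y)` and `μ(y−x)`. For `y < b⁻` the
subgradient inequality at `b⁻` gives `g x + λ(x−y) ≥ g b⁻ + λ(b⁻−y)`, and symmetrically for `y > b⁺`.
For `b⁻ ≤ y ≤ b⁺`, convexity propagates the subgradient inequality from `b⁻` (resp. `b⁺`) to every
point `y` between `b⁻` and `x` (resp. between `x` and `b⁺`), giving `g y ≤ g x + λ(x−y)` for `x ≥ y`
and `g y ≤ g x + μ(y−x)` for `x ≤ y`. In each case the minimum is attained at `b⁻`, `y` or `b⁺`. -/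

open Filter Topology Set

theorem ConvexOn.add_mul_sub_le_of_mem_subdiff {g : ℝ → ℝ} (hg : ConvexOn ℝ univ g)
    {a d x y : ℝ} (hd : d ∈ subdiff g a) (hy : y ∈ segment ℝ a x) :
    g y + d * (x - y) ≤ g x := by
  obtain ⟨s, t, hs, ht, hst, rfl⟩ := hy
  have hconv := hg.2 (mem_univ a) (mem_univ x) hs ht hst
  have hsub := hd x
  simp only [smul_eq_mul] at hconv ⊢
  have hs' : s = 1 - t := by linarith
  subst hs'
  nlinarith [mul_le_mul_of_nonneg_left hsub hs]

section Penalty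

variable {lam mu : ℝ} (hlam : 0 ≤ lam) (hmu : 0 ≤ mu) (x y : ℝ)
include hlam hmu

theorem mul_sub_le_penalty_left : lam * (x - y) ≤ lam * max (x - y) 0 + mu * max (y - x) 0 := by
  nlinarith [le_max_left (x - y) 0, le_max_right (y - x) 0]

theorem mul_sub_le_penalty_right : mu * (y - x) ≤ lam * max (x - y) 0 + mu * max (y - x) 0 := by
  nlinarith [le_max_right (x - y) 0, le_max_left (y - x) 0]

end Penalty

theorem stmt_12_general (g : ℝ → ℝ) (hg : ConvexOn ℝ Set.univ g)
    (lam mu : ℝ) (hlam : 0 ≤ lam) (hmu : 0 ≤ mu)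
    (bm bp : ℝ) (hbm : -lam ∈ subdiff g bm) (hbp : mu ∈ subdiff g bp) :
    ∀ y : ℝ,
      (y < bm → IsLeast (Set.range fun x => g x + lam * max (x - y) 0 + mu * max (y - x) 0)
          (g bm + lam * (bm - y))) ∧
      (bm ≤ y → y ≤ bp →
        IsLeast (Set.range fun x => g x + lam * max (x - y) 0 + mu * max (y - x) 0) (g y)) ∧
      (bp < y → IsLeast (Set.range fun x => g x + lam * max (x - y) 0 + mu * max (y - x) 0)
          (g bp + mu * (y - bp))) := by
  intro y
  refine ⟨fun hy => ⟨⟨bm, ?_⟩, ?_⟩, fun hmy hyp => ⟨⟨y, by simp⟩, ?_⟩, fun hy => ⟨⟨bp, ?_⟩, ?_⟩⟩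
  · dsimp only
    rw [max_eq_left (by linarith), max_eq_right (by linarith)]
    ring
  · rintro _ ⟨x, rfl⟩
    linarith [hbm x, mul_sub_le_penalty_left hlam hmu x y]
  · rintro _ ⟨x, rfl⟩
    rcases le_total x y with hxy | hyx
    · have := hg.add_mul_sub_le_of_mem_subdiff hbp
        (by rw [segment_eq_uIcc]; exact mem_uIcc_of_ge hxy hyp : y ∈ segment ℝ bp x)
      linarith [mul_sub_le_penalty_right hlam hmu x y]
    · have := hg.add_mul_sub_le_of_mem_subdiff hbm
        (by rw [segment_eq_uIcc]; exact mem_uIcc_of_le hmy hyx : y ∈ segment ℝ bm x)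
      linarith [mul_sub_le_penalty_left hlam hmu x y]
  · dsimp only
    rw [max_eq_right (by linarith), max_eq_left (by linarith)]
    ring
  · rintro _ ⟨x, rfl⟩
    linarith [hbp x, mul_sub_le_penalty_right hlam hmu x y]

theorem stmt_12 (g : ℝ → ℝ) (hg : ConvexOn ℝ Set.univ g)
    (hlev : ∃ α : ℝ, {x : ℝ | g x ≤ α}.Nonempty ∧ Bornology.IsBounded {x : ℝ | g x ≤ α})
    (lam mu : ℝ) (hlam : 0 ≤ lam) (hmu : 0 ≤ mu)
    (bm bp : ℝ) (hb : bm ≤ bp) (hbm : -lam ∈ subdiff g bm) (hbp : mu ∈ subdiff g bp) :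
    ∀ y : ℝ,
      (y < bm → IsLeast (Set.range fun x => g x + lam * max (x - y) 0 + mu * max (y - x) 0)
          (g bm + lam * (bm - y))) ∧
      (bm ≤ y → y ≤ bp →
        IsLeast (Set.range fun x => g x + lam * max (x - y) 0 + mu * max (y - x) 0) (g y)) ∧
      (bp < y → IsLeast (Set.range fun x => g x + lam * max (x - y) 0 + mu * max (y - x) 0)
          (g bp + mu * (y - bp))) :=
  stmt_12_general g hg lam mu hlam hmu bm bp hbm hbp
end

section
/- Let g : ℝ → ℝ be convex with bounded nonempty sublevel sets, let λ, μ ∈ [0,∞), and let b⁻ ≤ b⁺ satisfy −λ ∈ ∂g(b⁻) and μ ∈ ∂g(b⁺). Define h : ℝ → ℝ by h(y) = g(b⁻) + λ(b⁻ − y) for y < b⁻, h(y) = g(y) for b⁻ ≤ y ≤ b⁺, and h(y) = g(b⁺) + μ(y − b⁺) for y > b⁺. Then h is convex on ℝ. -/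
open Filter Topology Set

/-! Outside `[b⁻, b⁺]` the function `h` is affine, and at each junction point the adjacent affine
piece is a supporting line of the whole function (for `b⁺` this uses `λ + μ ≥ 0`). A function on an
interval that is convex to the left and to the right of a point `c` and lies above a line through
`(c, t c)` is convex: the line separates the slopes of the chords on the two sides. -/

lemma convexOn_affine {s : Set ℝ} (hs : Convex ℝ s) (a d c : ℝ) :
    ConvexOn ℝ s fun y => a + d * (y - c) :=
  ⟨hs, fun x _ y _ p q _ _ hpq => le_of_eq <| by
    simp only [smul_eq_mul]; linear_combination (d * c - a) * hpq⟩

lemma convexOn_Iic_of_eq_affine {f : ℝ → ℝ} {c d : ℝ}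
    (hf : ∀ y < c, f y = f c + d * (y - c)) : ConvexOn ℝ (Iic c) f :=
  (convexOn_affine (convex_Iic c) (f c) d c).congr fun y hy => by
    rcases (show y ≤ c from hy).lt_or_eq with hy | rfl
    · exact (hf y hy).symm
    · simp

lemma convexOn_Ici_of_eq_affine {f : ℝ → ℝ} {c d : ℝ}
    (hf : ∀ y > c, f y = f c + d * (y - c)) : ConvexOn ℝ (Ici c) f :=
  (convexOn_affine (convex_Ici c) (f c) d c).congr fun y hy => by
    rcases (show c ≤ y from hy).lt_or_eq with hy | rfl
    · exact (hf y hy).symm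
    · simp

lemma convexOn_of_inter_Iic_of_inter_Ici {s : Set ℝ} {t : ℝ → ℝ} {c d : ℝ} (hs : Convex ℝ s)
    (hl : ConvexOn ℝ (s ∩ Iic c) t) (hr : ConvexOn ℝ (s ∩ Ici c) t)
    (hsupp : ∀ z ∈ s, t c + d * (z - c) ≤ t z) : ConvexOn ℝ s t := by
  refine convexOn_of_slope_mono_adjacent hs fun {x y z} hx hz hxy hyz => ?_
  have hy : y ∈ s := hs.ordConnected.out hx hz ⟨hxy.le, hyz.le⟩
  rcases le_or_gt z c with hzc | hcz
  · exact hl.slope_mono_adjacent ⟨hx, (hxy.trans hyz).le.trans hzc⟩ ⟨hz, hzc⟩ hxy hyz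
  rcases le_or_gt c x with hcx | hxc
  · exact hr.slope_mono_adjacent ⟨hx, hcx⟩ ⟨hz, hcx.trans (hxy.trans hyz).le⟩ hxy hyz
  have hc : c ∈ s := hs.ordConnected.out hx hz ⟨hxc.le, hcz.le⟩
  have hx_supp := hsupp x hx
  have hy_supp := hsupp y hy
  have hz_supp := hsupp z hz
  rw [div_le_div_iff₀ (sub_pos.2 hxy) (sub_pos.2 hyz)]
  rcases lt_trichotomy y c with hyc | rfl | hcy
  · -- the slope `σ` of the chord over `[y, c]` is at most `d`, so it separates the two slopes
    have hσ := hl.slope_mono_adjacent ⟨hx, hxc.le⟩ ⟨hc, self_mem_Iic⟩ hxy hyc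
    set σ := (t c - t y) / (c - y) with hσ_def
    have hσd : σ ≤ d := by rw [div_le_iff₀ (sub_pos.2 hyc)]; linarith
    have hσ_right : σ * (z - y) ≤ t z - t y := by
      rw [eq_div_iff (sub_pos.2 hyc).ne'] at hσ_def
      nlinarith [mul_le_mul_of_nonneg_right hσd (sub_pos.2 hcz).le]
    rw [div_le_iff₀ (sub_pos.2 hxy)] at hσ
    nlinarith [mul_le_mul_of_nonneg_right hσ (sub_pos.2 hyz).le,
      mul_le_mul_of_nonneg_right hσ_right (sub_pos.2 hxy).le]
  · nlinarith [mul_le_mul_of_nonneg_left hx_supp (sub_pos.2 hyz).le]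
  · have hτ := hr.slope_mono_adjacent ⟨hc, self_mem_Ici⟩ ⟨hz, hcz.le⟩ hcy hyz
    set τ := (t y - t c) / (y - c) with hτ_def
    have hdτ : d ≤ τ := by rw [le_div_iff₀ (sub_pos.2 hcy)]; linarith
    have hτ_left : t y - t x ≤ τ * (y - x) := by
      rw [eq_div_iff (sub_pos.2 hcy).ne'] at hτ_def
      nlinarith [mul_le_mul_of_nonneg_right hdτ (sub_pos.2 hxc).le]
    rw [le_div_iff₀ (sub_pos.2 hyz)] at hτ
    nlinarith [mul_le_mul_of_nonneg_right hτ (sub_pos.2 hxy).le,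
      mul_le_mul_of_nonneg_right hτ_left (sub_pos.2 hyz).le]

theorem stmt_13_general (g : ℝ → ℝ) (hg : ConvexOn ℝ Set.univ g)
    (lam mu : ℝ) (hlam : 0 ≤ lam) (hmu : 0 ≤ mu)
    (bm bp : ℝ) (hb : bm ≤ bp) (hbm : -lam ∈ subdiff g bm) (hbp : mu ∈ subdiff g bp)
    (h : ℝ → ℝ)
    (hh₁ : ∀ y : ℝ, y < bm → h y = g bm + lam * (bm - y))
    (hh₂ : ∀ y : ℝ, bm ≤ y → y ≤ bp → h y = g y)
    (hh₃ : ∀ y : ℝ, bp < y → h y = g bp + mu * (y - bp)) :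
    ConvexOn ℝ Set.univ h := by
  have hbm_eq : h bm = g bm := hh₂ bm le_rfl hb
  have hbp_eq : h bp = g bp := hh₂ bp hb le_rfl
  have h_left : ConvexOn ℝ (Iic bm) h :=
    convexOn_Iic_of_eq_affine (d := -lam) fun y hy => by rw [hh₁ y hy, hbm_eq]; ring
  have h_mid : ConvexOn ℝ (Icc bm bp) h :=
    (hg.subset (subset_univ _) (convex_Icc bm bp)).congr fun y hy => (hh₂ y hy.1 hy.2).symm
  have h_right : ConvexOn ℝ (Ici bp) h :=
    convexOn_Ici_of_eq_affine (d := mu) fun y hy => by rw [hh₃ y hy, hbp_eq]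
  have h_supp_bm : ∀ z ∈ Iic bp, h bm + -lam * (z - bm) ≤ h z := fun z hz => by
    rcases lt_or_ge z bm with hzm | hzm
    · rw [hh₁ z hzm, hbm_eq]; linarith
    · rw [hh₂ z hzm hz, hbm_eq]; exact hbm z
  have h_supp_bp : ∀ z ∈ univ, h bp + mu * (z - bp) ≤ h z := fun z _ => by
    rcases lt_or_ge z bm with hzm | hzm
    · rw [hh₁ z hzm, hbp_eq]
      nlinarith [hbp bm, mul_nonneg (add_nonneg hlam hmu) (sub_nonneg.2 hzm.le)]
    rcases le_or_gt z bp with hzp | hzp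
    · rw [hh₂ z hzm hzp, hbp_eq]; exact hbp z
    · rw [hh₃ z hzp, hbp_eq]
  have h_Iic : ConvexOn ℝ (Iic bp) h :=
    convexOn_of_inter_Iic_of_inter_Ici (convex_Iic bp) (h_left.subset inter_subset_right
      ((convex_Iic bp).inter (convex_Iic bm))) (by rwa [inter_comm, Ici_inter_Iic]) h_supp_bm
  exact convexOn_of_inter_Iic_of_inter_Ici convex_univ (by rwa [univ_inter])
    (by rwa [univ_inter]) h_supp_bp

theorem stmt_13 (g : ℝ → ℝ) (hg : ConvexOn ℝ Set.univ g)
    (hlev : ∃ α : ℝ, {x : ℝ | g x ≤ α}.Nonempty ∧ Bornology.IsBounded {x : ℝ | g x ≤ α})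
    (lam mu : ℝ) (hlam : 0 ≤ lam) (hmu : 0 ≤ mu)
    (bm bp : ℝ) (hb : bm ≤ bp) (hbm : -lam ∈ subdiff g bm) (hbp : mu ∈ subdiff g bp)
    (h : ℝ → ℝ)
    (hh₁ : ∀ y : ℝ, y < bm → h y = g bm + lam * (bm - y))
    (hh₂ : ∀ y : ℝ, bm ≤ y → y ≤ bp → h y = g y)
    (hh₃ : ∀ y : ℝ, bp < y → h y = g bp + mu * (y - bp)) :
    ConvexOn ℝ Set.univ h :=
  stmt_13_general g hg lam mu hlam hmu bm bp hb hbm hbp h hh₁ hh₂ hh₃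
end

section
/- Let g : ℝ → ℝ be convex with bounded nonempty sublevel sets, λ, μ ∈ [0,∞), b⁻ ≤ b⁺ with −λ ∈ ∂g(b⁻) and μ ∈ ∂g(b⁺), and let h be the function h(y) = min_x { g(x) + λ(x−y)₊ + μ(y−x)₊ }. If g is additionally differentiable on ℝ, then h is differentiable on ℝ. -/
open Filter Topology Set

/-- Subgradient inequality for a differentiable convex function. -/
lemma sg_ineq (g : ℝ → ℝ) (hg : ConvexOn ℝ Set.univ g) (hgdiff : Differentiable ℝ g)
    (x z : ℝ) : g x + deriv g x * (z - x) ≤ g z := by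
  rcases lt_trichotomy x z with hxz | rfl | hzx
  · have h1 := hg.deriv_le_slope (Set.mem_univ x) (Set.mem_univ z) hxz (hgdiff x)
    rw [slope_def_field] at h1
    rw [le_div_iff₀ (by linarith)] at h1
    linarith
  · simp
  · have h1 := hg.slope_le_deriv (Set.mem_univ z) (Set.mem_univ x) hzx (hgdiff x)
    rw [slope_def_field] at h1
    rw [div_le_iff₀ (by linarith)] at h1
    nlinarith

/-- If `d` is a subgradient of a differentiable function at `x`, then `deriv g x = d`. -/
lemma subdiff_deriv (g : ℝ → ℝ) (hgdiff : Differentiable ℝ g) (x d : ℝ)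
    (hd : d ∈ subdiff g x) : deriv g x = d := by
  have hmin : IsLocalMin (fun z => g z - d * z) x := by
    apply Filter.Eventually.of_forall
    intro z
    have := hd z
    simp only
    nlinarith
  have hder : HasDerivAt (fun z => g z - d * z) (deriv g x - d) x := by
    exact ((hgdiff x).hasDerivAt.sub ((hasDerivAt_id x).const_mul d)).congr_deriv (by ring)
  have := hmin.hasDerivAt_eq_zero hder
  linarith

theorem stmt_15 (g : ℝ → ℝ) (hg : ConvexOn ℝ Set.univ g)
    (hlev : ∃ α : ℝ, {x : ℝ | g x ≤ α}.Nonempty ∧ Bornology.IsBounded {x : ℝ | g x ≤ α})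
    (lam mu : ℝ) (hlam : 0 ≤ lam) (hmu : 0 ≤ mu)
    (bm bp : ℝ) (hb : bm ≤ bp) (hbm : -lam ∈ subdiff g bm) (hbp : mu ∈ subdiff g bp)
    (h : ℝ → ℝ)
    (hh : ∀ y : ℝ,
      IsLeast (Set.range fun x => g x + lam * max (x - y) 0 + mu * max (y - x) 0) (h y))
    (hgdiff : Differentiable ℝ g) :
    Differentiable ℝ h := by
  have hgbm : deriv g bm = -lam := subdiff_deriv g hgdiff bm (-lam) hbm
  have hgbp : deriv g bp = mu := subdiff_deriv g hgdiff bp mu hbp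
  have hmono : MonotoneOn (deriv g) Set.univ :=
    hg.monotoneOn_deriv (fun x _ => hgdiff x)
  -- formula on (-∞, bm]
  have hA : ∀ y, y ≤ bm → h y = g bm + lam * (bm - y) := by
    intro y hy
    refine (hh y).unique ⟨⟨bm, ?_⟩, ?_⟩
    · beta_reduce
      rw [max_eq_left (by linarith), max_eq_right (by linarith)]
      ring
    · rintro v ⟨x, rfl⟩
      have h1 := hbm x
      rcases le_total y x with hxy | hxy
      · beta_reduce
        rw [max_eq_left (by linarith)]
        have h2 : 0 ≤ mu * max (y - x) 0 := mul_nonneg hmu (le_max_right _ _)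
        nlinarith
      · beta_reduce
        rw [max_eq_right (by linarith), max_eq_left (by linarith)]
        nlinarith [mul_nonneg hlam (sub_nonneg.2 hxy), mul_nonneg hmu (sub_nonneg.2 hxy)]
  -- formula on [bm, bp]
  have hB : ∀ y, bm ≤ y → y ≤ bp → h y = g y := by
    intro y h1 h2
    have hd1 : -lam ≤ deriv g y := hgbm ▸ hmono (Set.mem_univ bm) (Set.mem_univ y) h1
    have hd2 : deriv g y ≤ mu := hgbp ▸ hmono (Set.mem_univ y) (Set.mem_univ bp) h2
    refine (hh y).unique ⟨⟨y, by simp⟩, ?_⟩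
    rintro v ⟨x, rfl⟩
    have hsg := sg_ineq g hg hgdiff y x
    rcases le_total y x with hxy | hxy
    · beta_reduce
      rw [max_eq_left (by linarith)]
      have h3 : 0 ≤ mu * max (y - x) 0 := mul_nonneg hmu (le_max_right _ _)
      nlinarith [mul_le_mul_of_nonneg_right hd1 (sub_nonneg.2 hxy)]
    · beta_reduce
      rw [max_eq_right (by linarith), max_eq_left (by linarith)]
      nlinarith [mul_le_mul_of_nonneg_right hd2 (sub_nonneg.2 hxy)]
  -- formula on [bp, ∞)
  have hC : ∀ y, bp ≤ y → h y = g bp + mu * (y - bp) := by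
    intro y hy
    refine (hh y).unique ⟨⟨bp, ?_⟩, ?_⟩
    · beta_reduce
      rw [max_eq_right (by linarith), max_eq_left (by linarith)]
      ring
    · rintro v ⟨x, rfl⟩
      have h1 := hbp x
      rcases le_total x y with hxy | hxy
      · beta_reduce
        rw [max_eq_right (by linarith), max_eq_left (by linarith)]
        nlinarith
      · beta_reduce
        rw [max_eq_left (by linarith), max_eq_right (by linarith)]
        nlinarith [mul_nonneg hlam (sub_nonneg.2 hxy), mul_nonneg hmu (sub_nonneg.2 hxy)]
  -- affine pieces
  have haffL : ∀ y : ℝ, HasDerivAt (fun t => g bm + lam * (bm - t)) (-lam) y := by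
    intro y
    have : HasDerivAt (fun t : ℝ => g bm + lam * (bm - t)) (lam * (-1)) y :=
      (((hasDerivAt_id y).const_sub bm).const_mul lam).const_add (g bm)
    simpa using this
  have haffR : ∀ y : ℝ, HasDerivAt (fun t => g bp + mu * (t - bp)) mu y := by
    intro y
    have : HasDerivAt (fun t : ℝ => g bp + mu * (t - bp)) (mu * 1) y :=
      (((hasDerivAt_id y).sub_const bp).const_mul mu).const_add (g bp)
    simpa using this
  -- one-sided derivatives at junctions
  have hleft_bm : HasDerivWithinAt h (-lam) (Set.Iic bm) bm :=
    ((haffL bm).hasDerivWithinAt).congr (fun x hx => hA x hx) (hA bm le_rfl)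
  have hright_bp : HasDerivWithinAt h mu (Set.Ici bp) bp :=
    ((haffR bp).hasDerivWithinAt).congr (fun x hx => hC x hx) (hC bp le_rfl)
  have hright_bm : HasDerivWithinAt h (-lam) (Set.Ici bm) bm := by
    rcases eq_or_lt_of_le hb with heq | hlt
    · -- bm = bp : right piece is affine with slope mu = -lam
      have hmul : mu = -lam := by rw [← hgbp, ← heq, hgbm]
      have : HasDerivWithinAt h mu (Set.Ici bm) bm :=
        ((haffR bm).hasDerivWithinAt).congr
          (fun x hx => hC x (heq ▸ hx)) (hC bm (le_of_eq heq.symm))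
      rwa [hmul] at this
    · have hgd : HasDerivWithinAt g (-lam) (Set.Ici bm) bm :=
        hgbm ▸ (hgdiff bm).hasDerivAt.hasDerivWithinAt
      refine hgd.congr_of_eventuallyEq ?_ (hB bm le_rfl hb)
      have hmem : Set.Iio bp ∈ 𝓝[Set.Ici bm] bm :=
        nhdsWithin_le_nhds (Iio_mem_nhds hlt)
      filter_upwards [hmem, self_mem_nhdsWithin] with t ht1 ht2
      exact hB t ht2 (le_of_lt ht1)
  have hleft_bp : HasDerivWithinAt h mu (Set.Iic bp) bp := by
    rcases eq_or_lt_of_le hb with heq | hlt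
    · have hmul : mu = -lam := by rw [← hgbp, ← heq, hgbm]
      have : HasDerivWithinAt h (-lam) (Set.Iic bp) bp :=
        ((haffL bp).hasDerivWithinAt).congr
          (fun x hx => hA x (heq ▸ hx)) (hA bp (le_of_eq heq.symm))
      rwa [← hmul] at this
    · have hgd : HasDerivWithinAt g mu (Set.Iic bp) bp :=
        hgbp ▸ (hgdiff bp).hasDerivAt.hasDerivWithinAt
      refine hgd.congr_of_eventuallyEq ?_ (hB bp hb le_rfl)
      have hmem : Set.Ioi bm ∈ 𝓝[Set.Iic bp] bp :=
        nhdsWithin_le_nhds (Ioi_mem_nhds hlt)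
      filter_upwards [hmem, self_mem_nhdsWithin] with t ht1 ht2
      exact hB t (le_of_lt ht1) ht2
  -- main case analysis
  intro y
  rcases lt_trichotomy y bm with h1 | rfl | h1
  · -- y < bm : locally affine
    have hev : h =ᶠ[𝓝 y] fun t => g bm + lam * (bm - t) := by
      filter_upwards [Iio_mem_nhds h1] with t ht
      exact hA t (le_of_lt ht)
    exact ((haffL y).congr_of_eventuallyEq hev).differentiableAt
  · -- y = bm : glue
    have := hleft_bm.union hright_bm
    rw [Set.Iic_union_Ici] at this
    exact (hasDerivWithinAt_univ.mp this).differentiableAt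
  · rcases lt_trichotomy y bp with h2 | rfl | h2
    · -- bm < y < bp : locally equal to g
      have hev : h =ᶠ[𝓝 y] g := by
        filter_upwards [Ioo_mem_nhds h1 h2] with t ht
        exact hB t (le_of_lt ht.1) (le_of_lt ht.2)
      exact ((hgdiff y).hasDerivAt.congr_of_eventuallyEq hev).differentiableAt
    · -- y = bp : glue
      have := hleft_bp.union hright_bp
      rw [Set.Iic_union_Ici] at this
      exact (hasDerivWithinAt_univ.mp this).differentiableAt
    · -- y > bp : locally affine
      have hev : h =ᶠ[𝓝 y] fun t => g bp + mu * (t - bp) := by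
        filter_upwards [Ioi_mem_nhds h2] with t ht
        exact hC t (le_of_lt ht)
      exact ((haffR y).congr_of_eventuallyEq hev).differentiableAt
end
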